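/- Fix t ∈ ℂ. Let φ : ℂ[X,Y,Z] → ℂ[x,y,z] be the ℂ-algebra homomorphism determined by X ↦ x, Y ↦ y+z, Z ↦ (y-z)^2, and let I_t ⊂ ℂ[x,y,z] be the ideal generated by y^3+y^2z+yz^2+z^3+tx and x^2+y^6+y^5z+y^4z^2+y^3z^3+y^2z^4+yz^5+z^6. Then the preimage ideal φ^{-1}(I_t) equals the ideal of ℂ[X,Y,Z] generated by YZ + Y^3 + 2tX and 64X^2 + Z^3 + 21Y^2Z^2 + 35Y^4Z + 7Y^6. -/
import Mathlib

open MvPolynomial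

noncomputable section Aux6

namespace Stmt6Aux

abbrev R3 := MvPolynomial (Fin 3) ℂ

def phi : R3 →ₐ[ℂ] R3 :=
  aeval ![(X 0 : R3), X 1 + X 2, (X 1 - X 2) ^ 2]

def sig : R3 →ₐ[ℂ] R3 := rename (Equiv.swap (1 : Fin 3) 2)

@[simp] lemma phi_X0 : phi (X 0) = X 0 := by simp [phi]
@[simp] lemma phi_X1 : phi (X 1) = X 1 + X 2 := by simp [phi]
@[simp] lemma phi_X2 : phi (X 2) = (X 1 - X 2) ^ 2 := by simp [phi]
@[simp] lemma phi_C (r : ℂ) : phi (C r) = C r := by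
  simp [phi, algebraMap_eq]

@[simp] lemma sig_X0 : sig (X 0) = X 0 := by
  simp [sig, rename_X, Equiv.swap_apply_of_ne_of_ne]
@[simp] lemma sig_X1 : sig (X 1) = X 2 := by simp [sig, rename_X]
@[simp] lemma sig_X2 : sig (X 2) = X 1 := by simp [sig, rename_X]
@[simp] lemma sig_C (r : ℂ) : sig (C r) = C r := by simp [sig]

lemma sig_sig (p : R3) : sig (sig p) = p := by
  show (sig.comp sig) p = (AlgHom.id ℂ R3) p
  congr 1
  apply MvPolynomial.algHom_ext
  intro i
  fin_cases i <;> simp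

lemma sig_phi (p : R3) : sig (phi p) = phi p := by
  show (sig.comp phi) p = phi p
  congr 1
  apply MvPolynomial.algHom_ext
  intro i
  fin_cases i <;> simp <;> ring

lemma half_two : (C (1/2 : ℂ) : R3) * 2 = 1 := by
  rw [show (2 : R3) = C (2 : ℂ) from (map_ofNat C 2).symm, ← C_mul]
  norm_num

/-- split lemma: every polynomial is `phi a + (y - z) * phi b`. -/
lemma split (p : R3) : ∃ a b : R3, p = phi a + (X 1 - X 2) * phi b := by
  induction p using MvPolynomial.induction_on with
  | C r => exact ⟨C r, 0, by simp⟩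
  | add p q hp hq =>
    obtain ⟨a, b, rfl⟩ := hp
    obtain ⟨c, d, rfl⟩ := hq
    exact ⟨a + c, b + d, by simp only [map_add]; ring⟩
  | mul_X p n hp =>
    obtain ⟨a, b, rfl⟩ := hp
    have key : ∀ c d : R3,
        (phi a + (X 1 - X 2) * phi b) * (phi c + (X 1 - X 2) * phi d)
          = phi (a * c + X 2 * (b * d)) + (X 1 - X 2) * phi (a * d + b * c) := by
      intro c d
      simp only [map_add, map_mul, phi_X2]
      ring
    fin_cases n
    · exact ⟨a * X 0 + X 2 * (b * 0), a * 0 + b * X 0, by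
        rw [← key (X 0) 0]; simp⟩
    · refine ⟨a * (C (1/2) * X 1) + X 2 * (b * C (1/2)),
        a * C (1/2) + b * (C (1/2) * X 1), ?_⟩
      rw [← key (C (1/2) * X 1) (C (1/2))]
      simp only [map_mul, phi_C, phi_X1]
      show _ * X 1 = _
      linear_combination (-(phi a + (X 1 - X 2) * phi b)) * X 1 * half_two
    · refine ⟨a * (C (1/2) * X 1) + X 2 * (b * (-C (1/2))),
        a * (-C (1/2)) + b * (C (1/2) * X 1), ?_⟩
      rw [← key (C (1/2) * X 1) (-C (1/2))]
      simp only [map_mul, map_neg, phi_C, phi_X1]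
      show _ * X 2 = _
      linear_combination (-(phi a + (X 1 - X 2) * phi b)) * X 2 * half_two

lemma sub_ne : (X 1 - X 2 : R3) ≠ 0 := by
  intro h
  have := congrArg (eval ![0, 1, 0]) h
  simp at this

lemma two_ne : (2 : R3) ≠ 0 := by
  intro h
  have := congrArg (eval ![0, 0, 0]) h
  norm_num at this

/-- symmetric elements are in the range of phi -/
lemma symm_range {q : R3} (hq : sig q = q) : ∃ a, phi a = q := by
  obtain ⟨a, b, rfl⟩ := split q
  refine ⟨a, ?_⟩
  have h2 : sig (phi a + (X 1 - X 2) * phi b)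
      = phi a - (X 1 - X 2) * phi b := by
    simp only [map_add, map_mul, map_sub, sig_X1, sig_X2, sig_phi]
    ring
  rw [h2] at hq
  have hb : (X 1 - X 2) * phi b = 0 := by
    have h0 : (2 : R3) * ((X 1 - X 2) * phi b) = 0 := by linear_combination -hq
    exact (mul_eq_zero.mp h0).resolve_left two_ne
  have hb0 : phi b = 0 := (mul_eq_zero.mp hb).resolve_left sub_ne
  rw [hb0]; ring

lemma phi_injective : Function.Injective phi := by
  intro p q h
  apply MvPolynomial.funext
  intro v
  obtain ⟨s, hs⟩ := IsAlgClosed.exists_pow_nat_eq (k := ℂ) (v 2) zero_lt_two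
  set wv : Fin 3 → ℂ := ![v 0, (v 1 + s) / 2, (v 1 - s) / 2] with hwv
  have key : ∀ r : R3, eval v r = eval wv (phi r) := by
    intro r
    have hphe : phi r = eval₂ C ![(X 0 : R3), X 1 + X 2, (X 1 - X 2) ^ 2] r := by
      rw [phi, aeval_def, algebraMap_eq]
    have hv : (⇑(eval wv) ∘ ![(X 0 : R3), X 1 + X 2, (X 1 - X 2) ^ 2]) = v := by
      funext i
      fin_cases i
      · simp [hwv]
      · simp [hwv]; ring
      · simp [hwv]; linear_combination hs
    rw [hphe, ← eval_assoc, hv]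
  rw [key p, key q, h]

end Stmt6Aux

end Aux6

open Stmt6Aux

/-- Fix `t ∈ ℂ`. Let `φ : ℂ[X,Y,Z] → ℂ[x,y,z]` be the ℂ-algebra homomorphism with
`X ↦ x`, `Y ↦ y+z`, `Z ↦ (y-z)^2`, and let `I_t` be the ideal generated by
`y^3+y^2z+yz^2+z^3+tx` and `x^2+y^6+y^5z+y^4z^2+y^3z^3+y^2z^4+yz^5+z^6`. Then
`φ⁻¹(I_t)` is generated by `YZ + Y^3 + 2tX` and
`64X^2 + Z^3 + 21Y^2Z^2 + 35Y^4Z + 7Y^6`.  Here `x = X 0`, `y = X 1`, `z = X 2`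
(and likewise for the source copy). -/
theorem stmt_6 (t : ℂ) :
    Ideal.comap
      (aeval ![(X 0 : MvPolynomial (Fin 3) ℂ), X 1 + X 2, (X 1 - X 2) ^ 2] :
        MvPolynomial (Fin 3) ℂ →ₐ[ℂ] MvPolynomial (Fin 3) ℂ)
      (Ideal.span
        {(X 1 : MvPolynomial (Fin 3) ℂ) ^ 3 + (X 1) ^ 2 * X 2 + X 1 * (X 2) ^ 2
            + (X 2) ^ 3 + C t * X 0,
          (X 0) ^ 2 + (X 1) ^ 6 + (X 1) ^ 5 * X 2 + (X 1) ^ 4 * (X 2) ^ 2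
            + (X 1) ^ 3 * (X 2) ^ 3 + (X 1) ^ 2 * (X 2) ^ 4 + X 1 * (X 2) ^ 5
            + (X 2) ^ 6}) =
    Ideal.span
      {(X 1 : MvPolynomial (Fin 3) ℂ) * X 2 + (X 1) ^ 3 + 2 * C t * X 0,
        64 * (X 0) ^ 2 + (X 2) ^ 3 + 21 * (X 1) ^ 2 * (X 2) ^ 2
          + 35 * (X 1) ^ 4 * X 2 + 7 * (X 1) ^ 6} := by
  set g1 : R3 := (X 1 : R3) ^ 3 + (X 1) ^ 2 * X 2 + X 1 * (X 2) ^ 2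
      + (X 2) ^ 3 + C t * X 0 with hg1
  set g2 : R3 := (X 0 : R3) ^ 2 + (X 1) ^ 6 + (X 1) ^ 5 * X 2 + (X 1) ^ 4 * (X 2) ^ 2
      + (X 1) ^ 3 * (X 2) ^ 3 + (X 1) ^ 2 * (X 2) ^ 4 + X 1 * (X 2) ^ 5 + (X 2) ^ 6 with hg2
  set G : R3 := (X 1 : R3) * X 2 + (X 1) ^ 3 + 2 * C t * X 0 with hG
  set H : R3 := 64 * (X 0 : R3) ^ 2 + (X 2) ^ 3 + 21 * (X 1) ^ 2 * (X 2) ^ 2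
      + 35 * (X 1) ^ 4 * X 2 + 7 * (X 1) ^ 6 with hH
  have hphi : (aeval ![(X 0 : R3), X 1 + X 2, (X 1 - X 2) ^ 2] :
      R3 →ₐ[ℂ] R3) = phi := rfl
  rw [hphi]
  have hphiG : phi G = 2 * g1 := by
    simp only [hG, hg1, map_add, map_mul, map_pow, map_ofNat,
      phi_X0, phi_X1, phi_X2, phi_C]
    ring
  have hphiH : phi H = 64 * g2 := by
    simp only [hH, hg2, map_add, map_mul, map_pow, map_ofNat,
      phi_X0, phi_X1, phi_X2, phi_C]
    ring
  have hsg1 : sig g1 = g1 := by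
    simp only [hg1, map_add, map_mul, map_pow, sig_X0, sig_X1, sig_X2, sig_C]
    ring
  have hsg2 : sig g2 = g2 := by
    simp only [hg2, map_add, map_mul, map_pow, sig_X0, sig_X1, sig_X2]
    ring
  apply le_antisymm
  · -- hard direction
    intro p hp
    rw [Ideal.mem_comap, Ideal.mem_span_pair] at hp
    obtain ⟨A, B, hAB⟩ := hp
    have hAB' : sig A * g1 + sig B * g2 = phi p := by
      have := congrArg sig hAB
      simpa only [map_add, map_mul, hsg1, hsg2, sig_phi] using this
    obtain ⟨a, ha⟩ := symm_range (q := A + sig A) (by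
      simp [map_add, sig_sig, add_comm])
    obtain ⟨b, hb⟩ := symm_range (q := B + sig B) (by
      simp [map_add, sig_sig, add_comm])
    have key : phi (128 * p) = phi (32 * (a * G) + b * H) := by
      simp only [map_mul, map_add, map_ofNat]
      rw [ha, hb, hphiG, hphiH]
      linear_combination (-64 : R3) * hAB + (-64 : R3) * hAB'
    have hkey := phi_injective key
    have hmem : 32 * (a * G) + b * H ∈ Ideal.span ({G, H} : Set R3) := by
      rw [Ideal.mem_span_pair]
      exact ⟨32 * a, b, by ring⟩
    rw [← hkey] at hmem
    have hp128 : p = C (128⁻¹ : ℂ) * (128 * p) := by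
      rw [show (128 : R3) = C (128 : ℂ) from (map_ofNat C 128).symm,
        ← mul_assoc, ← C_mul]
      norm_num
    rw [hp128]
    exact Ideal.mul_mem_left _ _ hmem
  · -- easy direction
    rw [Ideal.span_le]
    rintro x (rfl | rfl)
    · rw [SetLike.mem_coe, Ideal.mem_comap, hphiG, Ideal.mem_span_pair]
      exact ⟨2, 0, by ring⟩
    · rw [SetLike.mem_coe, Ideal.mem_comap, hphiH, Ideal.mem_span_pair]
      exact ⟨0, 64, by ring⟩
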